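/- Let R be a commutative ring, equip the free algebra R⟨X₁,…,Xₙ⟩ with a weight ℕ-gradation determined by positive integer degrees deg Xᵢ = nᵢ, and let ≺ be an ℕ-graded monomial ordering on the standard monomial basis B. Let I be an ideal of R⟨X₁,…,Xₙ⟩ admitting a monic Gröbner basis G with respect to ≺, and let J = ⟨LH(I)⟩. Then the following two-sided ideals of R⟨X₁,…,Xₙ⟩ coincide: the ideal generated by {LC(f)·LM(f) : f ∈ J, f ≠ 0}, the ideal generated by {LC(f)·LM(f) : f ∈ I, f ≠ 0}, the ideal generated by LM(G), the ideal generated by LM(I), and the ideal generated by LM(J). -/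

import Mathlib

noncomputable section
open MonoidAlgebra
open scoped Classical

/-- Words in the alphabet `X_1, ..., X_n`: the standard monomial basis `B`. -/
abbrev Word (n : ℕ) : Type := FreeMonoid (Fin n)

/-- The free `R`-algebra `R⟨X_1, ..., X_n⟩`, realized as the monoid algebra of the
free monoid on `n` letters over `R`. -/
abbrev FreeAlg (R : Type) [CommRing R] (n : ℕ) : Type := MonoidAlgebra R (Word n)

variable {R : Type} [CommRing R] {n : ℕ}

/-- The monomial (word) `w` viewed as an element of the free algebra. -/
def mono (R : Type) [CommRing R] {n : ℕ} (w : Word n) : FreeAlg R n :=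
  MonoidAlgebra.of R (Word n) w

/-- A monomial ordering: a well-ordering on words compatible with two-sided multiplication. -/
def IsMonomialOrder (n : ℕ) [LinearOrder (Word n)] : Prop :=
  WellFoundedLT (Word n) ∧ ∀ w u v s : Word n, u < v → w * u * s < w * v * s

/-- The leading monomial of `f` (with junk value `1` for `f = 0`). -/
def LMon [LinearOrder (Word n)] (f : FreeAlg R n) : Word n :=
  if h : f = 0 then 1 else f.coeff.support.max'
    (Finsupp.support_nonempty_iff.mpr (fun h' => h (MonoidAlgebra.coeff_eq_zero.mp h')))

/-- The leading coefficient of `f`. -/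
def LCoef [LinearOrder (Word n)] (f : FreeAlg R n) : R := f.coeff (LMon f)

/-- `f` is monic: it is nonzero and its leading coefficient is `1`. -/
def IsMonic [LinearOrder (Word n)] (f : FreeAlg R n) : Prop := f ≠ 0 ∧ LCoef f = 1

/-- `v` divides `u` as words: `u = w * v * s` for some words `w, s`. -/
def MDvd {n : ℕ} (v u : Word n) : Prop := ∃ w s : Word n, u = w * v * s

/-- `G` is a monic Gröbner basis of the two-sided ideal `I`: every element of `G` is monic,
and the leading monomial of every nonzero element of `I` is divisible by the leading
monomial of some element of `G`. -/
def IsMonicGB [LinearOrder (Word n)] (G : Set (FreeAlg R n))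
    (I : TwoSidedIdeal (FreeAlg R n)) : Prop :=
  (∀ g ∈ G, IsMonic g) ∧ ∀ f ∈ I, f ≠ 0 → ∃ g ∈ G, MDvd (LMon g) (LMon f)

/-- The weight degree of a word, for the weights `deg Xᵢ = d i`. -/
def wdeg {n : ℕ} (d : Fin n → ℕ) (w : Word n) : ℕ := ((FreeMonoid.toList w).map d).sum

/-- The maximal weight degree occurring in `f`. -/
def maxdeg (d : Fin n → ℕ) (f : FreeAlg R n) : ℕ := f.coeff.support.sup (wdeg d)

/-- The ℕ-leading homogeneous element `LH(f)` of `f`: the sum of the terms of `f` of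
maximal weight degree. -/
def LH (d : Fin n → ℕ) (f : FreeAlg R n) : FreeAlg R n :=
  ∑ w ∈ f.coeff.support.filter (fun w => wdeg d w = maxdeg d f), MonoidAlgebra.single w (f.coeff w)

/-- The set `LH(S)` of leading homogeneous elements of the nonzero elements of `S`. -/
def LHset (d : Fin n → ℕ) (S : Set (FreeAlg R n)) : Set (FreeAlg R n) :=
  {x | ∃ f ∈ S, f ≠ 0 ∧ x = LH d f}

/-- An ℕ-graded monomial ordering with respect to the weights `d`: a monomial ordering
such that words of smaller degree are smaller. -/
def IsGradedMonomialOrder {n : ℕ} (d : Fin n → ℕ) [LinearOrder (Word n)] : Prop :=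
  IsMonomialOrder n ∧ ∀ u v : Word n, wdeg d u < wdeg d v → u < v

/-- The leading term `LC(f)·LM(f)` of `f`, as an element of the free algebra. -/
def LTerm [LinearOrder (Word n)] (f : FreeAlg R n) : FreeAlg R n :=
  MonoidAlgebra.single (LMon f) (LCoef f)

/-- The set of leading terms `LC(f)·LM(f)` of the nonzero elements of `S`. -/
def LTset [LinearOrder (Word n)] (S : Set (FreeAlg R n)) : Set (FreeAlg R n) :=
  {x | ∃ f ∈ S, f ≠ 0 ∧ x = LTerm f}

/-- The set `LM(S)` of leading monomials of the nonzero elements of `S`. -/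
def LMset [LinearOrder (Word n)] (S : Set (FreeAlg R n)) : Set (Word n) :=
  {w | ∃ f ∈ S, f ≠ 0 ∧ LMon f = w}

/-!
Because the order refines the weight degree, the leading term of `f` lies in its top-degree
component `LH(f)`, so `f` and `LH(f)` have the same leading term. Conversely, the elements `h`
whose degree-`m` component is, for every `m`, the degree-`m` component of some element of `I` of
degree at most `m` form a two-sided ideal containing `LH(I)`; hence every nonzero `h ∈ J = ⟨LH(I)⟩`
shares its leading term with some nonzero `f ∈ I`. Thus `J` and `I` have the same leading terms
and leading monomials. Finally, the leading monomial of each element of `I` is a multiple of some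
`LM(g)`, `g ∈ G`, and for monic `g` the monomial `LM(g)` is itself the leading term of `g ∈ I`.
-/

section WeightComponent

variable {d : Fin n → ℕ}

def weightComponent (d : Fin n → ℕ) (m : ℕ) : FreeAlg R n →+ FreeAlg R n :=
  AddMonoidHom.mk' (fun f => ofCoeff (f.coeff.filter (wdeg d · = m))) fun _ _ =>
    congrArg ofCoeff (Finsupp.filter_add ..)

@[simp]
lemma coeff_weightComponent (m : ℕ) (f : FreeAlg R n) (u : Word n) :
    (weightComponent d m f).coeff u = if wdeg d u = m then f.coeff u else 0 :=
  Finsupp.filter_apply ..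

lemma LH_eq_weightComponent (f : FreeAlg R n) : LH d f = weightComponent d (maxdeg d f) f := by
  ext u
  rw [coeff_weightComponent, LH, coeff_sum, Finsupp.finsetSum_apply]
  by_cases hu : f.coeff u = 0 <;> simp [coeff_single, Finsupp.single_apply, hu]

lemma weightComponent_idem (m : ℕ) (f : FreeAlg R n) :
    weightComponent d m (weightComponent d m f) = weightComponent d m f := by
  ext u
  simp only [coeff_weightComponent]
  split_ifs <;> rfl

lemma weightComponent_weightComponent_of_ne {k m : ℕ} (hkm : k ≠ m) (f : FreeAlg R n) :
    weightComponent d m (weightComponent d k f) = 0 := by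
  ext u
  simp only [coeff_weightComponent, coeff_zero, Finsupp.coe_zero, Pi.zero_apply]
  split_ifs <;> simp_all

lemma weightComponent_single (m : ℕ) (w : Word n) (b : R) :
    weightComponent d m (single w b) = if wdeg d w = m then single w b else 0 := by
  split_ifs with hw <;> ext u <;> rcases eq_or_ne w u with rfl | hu <;>
    simp [coeff_single, *]

lemma maxdeg_le_iff {f : FreeAlg R n} {m : ℕ} :
    maxdeg d f ≤ m ↔ ∀ k, m < k → weightComponent d k f = 0 := by
  simp only [maxdeg, Finset.sup_le_iff, Finsupp.mem_support_iff]
  refine ⟨fun hf k hk => ?_, fun hf w hw => ?_⟩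
  · ext u
    by_cases hu : f.coeff u = 0
    · simp [hu]
    · simp [show wdeg d u ≠ k by have := hf u hu; omega]
  · by_contra! hlt
    simpa [hw] using congrArg (fun g : FreeAlg R n => g.coeff w) (hf _ hlt)

lemma weightComponent_eq_zero_of_maxdeg_lt {f : FreeAlg R n} {m : ℕ} (h : maxdeg d f < m) :
    weightComponent d m f = 0 :=
  maxdeg_le_iff.1 le_rfl m h

lemma maxdeg_weightComponent_le (m : ℕ) (f : FreeAlg R n) :
    maxdeg d (weightComponent d m f) ≤ m :=
  maxdeg_le_iff.2 fun _ hk => weightComponent_weightComponent_of_ne (by omega) f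

lemma wdeg_mul (u v : Word n) : wdeg d (u * v) = wdeg d u + wdeg d v := by
  simp [wdeg]

lemma weightComponent_single_mul (m : ℕ) (u : Word n) (c : R) (h : FreeAlg R n) :
    weightComponent d m (single u c * h) =
      if wdeg d u ≤ m then single u c * weightComponent d (m - wdeg d u) h else 0 := by
  induction h using MonoidAlgebra.induction_linear with
  | zero => simp
  | add f g hf hg => simp only [mul_add, map_add, hf, hg]; split_ifs <;> simp
  | single w b =>
    simp only [single_mul_single, weightComponent_single, wdeg_mul]
    split_ifs <;> first | omega | simp [single_mul_single]

lemma weightComponent_mul_single (m : ℕ) (u : Word n) (c : R) (h : FreeAlg R n) :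
    weightComponent d m (h * single u c) =
      if wdeg d u ≤ m then weightComponent d (m - wdeg d u) h * single u c else 0 := by
  induction h using MonoidAlgebra.induction_linear with
  | zero => simp
  | add f g hf hg => simp only [add_mul, map_add, hf, hg]; split_ifs <;> simp
  | single w b =>
    simp only [single_mul_single, weightComponent_single, wdeg_mul]
    split_ifs <;> first | omega | simp [single_mul_single]

end WeightComponent

section LeadingForms

variable {d : Fin n → ℕ} {I : TwoSidedIdeal (FreeAlg R n)}

def HasLeadingFormComponents (d : Fin n → ℕ) (I : TwoSidedIdeal (FreeAlg R n))
    (h : FreeAlg R n) : Prop :=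
  ∀ m, ∃ f ∈ I, maxdeg d f ≤ m ∧ weightComponent d m f = weightComponent d m h

namespace HasLeadingFormComponents

lemma zero : HasLeadingFormComponents d I 0 :=
  fun _ => ⟨0, I.zero_mem, by simp [maxdeg], rfl⟩

lemma add {h₁ h₂ : FreeAlg R n} (p₁ : HasLeadingFormComponents d I h₁)
    (p₂ : HasLeadingFormComponents d I h₂) : HasLeadingFormComponents d I (h₁ + h₂) := by
  intro m
  obtain ⟨f₁, hf₁, hd₁, hc₁⟩ := p₁ m
  obtain ⟨f₂, hf₂, hd₂, hc₂⟩ := p₂ m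
  refine ⟨f₁ + f₂, I.add_mem hf₁ hf₂, maxdeg_le_iff.2 fun k hk => ?_, by simp [hc₁, hc₂]⟩
  rw [map_add, weightComponent_eq_zero_of_maxdeg_lt (by omega),
    weightComponent_eq_zero_of_maxdeg_lt (by omega), add_zero]

lemma neg {h : FreeAlg R n} (p : HasLeadingFormComponents d I h) :
    HasLeadingFormComponents d I (-h) := by
  intro m
  obtain ⟨f, hf, hfd, hc⟩ := p m
  refine ⟨-f, I.neg_mem hf, maxdeg_le_iff.2 fun k hk => ?_, by simp [hc]⟩
  rw [map_neg, weightComponent_eq_zero_of_maxdeg_lt (by omega), neg_zero]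

lemma single_mul {h : FreeAlg R n} (p : HasLeadingFormComponents d I h) (u : Word n) (c : R) :
    HasLeadingFormComponents d I (single u c * h) := by
  intro m
  by_cases hu : wdeg d u ≤ m
  · obtain ⟨f, hf, hfd, hc⟩ := p (m - wdeg d u)
    refine ⟨single u c * f, I.mul_mem_left _ _ hf, maxdeg_le_iff.2 fun k hk => ?_, ?_⟩
    · rw [weightComponent_single_mul]
      split_ifs
      · rw [weightComponent_eq_zero_of_maxdeg_lt (by omega), mul_zero]
      · rfl
    · rw [weightComponent_single_mul, weightComponent_single_mul, if_pos hu, if_pos hu, hc]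
  · exact ⟨0, I.zero_mem, by simp [maxdeg], by rw [weightComponent_single_mul, if_neg hu, map_zero]⟩

lemma mul_single {h : FreeAlg R n} (p : HasLeadingFormComponents d I h) (u : Word n) (c : R) :
    HasLeadingFormComponents d I (h * single u c) := by
  intro m
  by_cases hu : wdeg d u ≤ m
  · obtain ⟨f, hf, hfd, hc⟩ := p (m - wdeg d u)
    refine ⟨f * single u c, I.mul_mem_right _ _ hf, maxdeg_le_iff.2 fun k hk => ?_, ?_⟩
    · rw [weightComponent_mul_single]
      split_ifs
      · rw [weightComponent_eq_zero_of_maxdeg_lt (by omega), zero_mul]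
      · rfl
    · rw [weightComponent_mul_single, weightComponent_mul_single, if_pos hu, if_pos hu, hc]
  · exact ⟨0, I.zero_mem, by simp [maxdeg], by rw [weightComponent_mul_single, if_neg hu, map_zero]⟩

lemma mul_left {h : FreeAlg R n} (p : HasLeadingFormComponents d I h) (x : FreeAlg R n) :
    HasLeadingFormComponents d I (x * h) := by
  induction x using MonoidAlgebra.induction_linear with
  | zero => rw [zero_mul]; exact zero
  | add f g hf hg => rw [add_mul]; exact hf.add hg
  | single u c => exact p.single_mul u c

lemma mul_right {h : FreeAlg R n} (p : HasLeadingFormComponents d I h) (x : FreeAlg R n) :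
    HasLeadingFormComponents d I (h * x) := by
  induction x using MonoidAlgebra.induction_linear with
  | zero => rw [mul_zero]; exact zero
  | add f g hf hg => rw [mul_add]; exact hf.add hg
  | single u c => exact p.mul_single u c

lemma LH {f : FreeAlg R n} (hf : f ∈ I) : HasLeadingFormComponents d I (LH d f) := by
  intro m
  rcases eq_or_ne (maxdeg d f) m with rfl | hne
  · exact ⟨f, hf, le_rfl, by rw [LH_eq_weightComponent, weightComponent_idem]⟩
  · exact ⟨0, I.zero_mem, by simp [maxdeg],
      by rw [LH_eq_weightComponent, weightComponent_weightComponent_of_ne hne, map_zero]⟩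

end HasLeadingFormComponents

def leadingFormIdeal (d : Fin n → ℕ) (I : TwoSidedIdeal (FreeAlg R n)) :
    TwoSidedIdeal (FreeAlg R n) :=
  TwoSidedIdeal.mk' {h | HasLeadingFormComponents d I h} .zero .add .neg
    (fun p => p.mul_left _) (fun p => p.mul_right _)

lemma span_LHset_le_leadingFormIdeal :
    TwoSidedIdeal.span (LHset d (I : Set (FreeAlg R n))) ≤ leadingFormIdeal d I :=
  TwoSidedIdeal.span_le.2 fun _ ⟨_, hf, _, hx⟩ => by
    rw [hx, SetLike.mem_coe, leadingFormIdeal, TwoSidedIdeal.mem_mk']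
    exact .LH hf

end LeadingForms

section LeadingTerms

variable [LinearOrder (Word n)] {d : Fin n → ℕ}

lemma LMon_mem_support {f : FreeAlg R n} (hf : f ≠ 0) : LMon f ∈ f.coeff.support := by
  rw [LMon, dif_neg hf]
  exact Finset.max'_mem ..

lemma le_LMon {f : FreeAlg R n} (hf : f ≠ 0) {w : Word n} (hw : w ∈ f.coeff.support) :
    w ≤ LMon f := by
  rw [LMon, dif_neg hf]
  exact Finset.le_max' _ _ hw

lemma LMon_eq_of_forall_le {f : FreeAlg R n} {v : Word n} (hv : v ∈ f.coeff.support)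
    (hle : ∀ w ∈ f.coeff.support, w ≤ v) : LMon f = v :=
  have hf : f ≠ 0 := by rintro rfl; simp at hv
  le_antisymm (hle _ (LMon_mem_support hf)) (le_LMon hf hv)

lemma wdeg_LMon (hdeg : ∀ u v : Word n, wdeg d u < wdeg d v → u < v) {f : FreeAlg R n}
    (hf : f ≠ 0) : wdeg d (LMon f) = maxdeg d f :=
  le_antisymm (Finset.le_sup (LMon_mem_support hf)) <| Finset.sup_le fun _ hw =>
    not_lt.1 fun hlt => (hdeg _ _ hlt).not_ge (le_LMon hf hw)

/-- With a degree-compatible order the leading term of `h` lies in its top-degree component. -/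
lemma LMon_LCoef_eq_of_weightComponent_eq (hdeg : ∀ u v : Word n, wdeg d u < wdeg d v → u < v)
    {f h : FreeAlg R n} (hh : h ≠ 0) (hm : maxdeg d f ≤ maxdeg d h)
    (hc : weightComponent d (maxdeg d h) f = weightComponent d (maxdeg d h) h) :
    f ≠ 0 ∧ LMon f = LMon h ∧ LCoef f = LCoef h := by
  have hcoeff : ∀ w, wdeg d w = maxdeg d h → f.coeff w = h.coeff w := fun w hw => by
    simpa [hw] using congrArg (fun g : FreeAlg R n => g.coeff w) hc
  have hL : f.coeff (LMon h) = h.coeff (LMon h) := hcoeff _ (wdeg_LMon hdeg hh)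
  have hmem : LMon h ∈ f.coeff.support := by
    rw [Finsupp.mem_support_iff, hL]
    exact Finsupp.mem_support_iff.1 (LMon_mem_support hh)
  have hLf : LMon f = LMon h := by
    refine LMon_eq_of_forall_le hmem fun w hw => ?_
    rcases (le_trans (Finset.le_sup hw) hm).lt_or_eq with hlt | heq
    · exact (hdeg _ _ (wdeg_LMon hdeg hh ▸ hlt)).le
    · rw [Finsupp.mem_support_iff, hcoeff w heq] at hw
      exact le_LMon hh (Finsupp.mem_support_iff.2 hw)
  exact ⟨by rintro rfl; simp at hmem, hLf, by rw [LCoef, LCoef, hLf, hL]⟩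

end LeadingTerms

section SameLeadingTerms

variable [LinearOrder (Word n)] {d : Fin n → ℕ}

lemma LTset_subset_LTset {S T : Set (FreeAlg R n)}
    (h : ∀ f ∈ S, f ≠ 0 → ∃ g ∈ T, g ≠ 0 ∧ LMon g = LMon f ∧ LCoef g = LCoef f) :
    LTset S ⊆ LTset T := by
  rintro _ ⟨f, hf, hf0, rfl⟩
  obtain ⟨g, hg, hg0, hLM, hLC⟩ := h f hf hf0
  exact ⟨g, hg, hg0, by rw [LTerm, LTerm, hLM, hLC]⟩

lemma LMset_subset_LMset {S T : Set (FreeAlg R n)}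
    (h : ∀ f ∈ S, f ≠ 0 → ∃ g ∈ T, g ≠ 0 ∧ LMon g = LMon f ∧ LCoef g = LCoef f) :
    LMset S ⊆ LMset T := by
  rintro _ ⟨f, hf, hf0, rfl⟩
  obtain ⟨g, hg, hg0, hLM, -⟩ := h f hf hf0
  exact ⟨g, hg, hg0, hLM⟩

variable {I : TwoSidedIdeal (FreeAlg R n)}

lemma exists_mem_span_LHset_same_leading (hdeg : ∀ u v : Word n, wdeg d u < wdeg d v → u < v)
    {f : FreeAlg R n} (hf : f ∈ I) (hf0 : f ≠ 0) :
    ∃ g ∈ TwoSidedIdeal.span (LHset d (I : Set (FreeAlg R n))),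
      g ≠ 0 ∧ LMon g = LMon f ∧ LCoef g = LCoef f :=
  ⟨LH d f, TwoSidedIdeal.subset_span ⟨f, hf, hf0, rfl⟩,
    LMon_LCoef_eq_of_weightComponent_eq hdeg hf0
      (LH_eq_weightComponent f ▸ maxdeg_weightComponent_le _ f)
      (by rw [LH_eq_weightComponent, weightComponent_idem])⟩

lemma exists_mem_same_leading_of_mem_span_LHset (hdeg : ∀ u v : Word n, wdeg d u < wdeg d v → u < v)
    {h : FreeAlg R n}
    (hh : h ∈ TwoSidedIdeal.span (LHset d (I : Set (FreeAlg R n)))) (hh0 : h ≠ 0) :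
    ∃ f ∈ I, f ≠ 0 ∧ LMon f = LMon h ∧ LCoef f = LCoef h := by
  have hJ := span_LHset_le_leadingFormIdeal hh
  rw [leadingFormIdeal, TwoSidedIdeal.mem_mk'] at hJ
  obtain ⟨f, hf, hfd, hc⟩ := hJ (maxdeg d h)
  exact ⟨f, hf, LMon_LCoef_eq_of_weightComponent_eq hdeg hh0 hfd hc⟩

lemma LTset_span_LHset (hdeg : ∀ u v : Word n, wdeg d u < wdeg d v → u < v) :
    LTset (TwoSidedIdeal.span (LHset d (I : Set (FreeAlg R n))) : Set (FreeAlg R n)) =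
      LTset (I : Set (FreeAlg R n)) :=
  (LTset_subset_LTset fun _ => exists_mem_same_leading_of_mem_span_LHset hdeg).antisymm
    (LTset_subset_LTset fun _ => exists_mem_span_LHset_same_leading hdeg)

lemma LMset_span_LHset (hdeg : ∀ u v : Word n, wdeg d u < wdeg d v → u < v) :
    LMset (TwoSidedIdeal.span (LHset d (I : Set (FreeAlg R n))) : Set (FreeAlg R n)) =
      LMset (I : Set (FreeAlg R n)) :=
  (LMset_subset_LMset fun _ => exists_mem_same_leading_of_mem_span_LHset hdeg).antisymm
    (LMset_subset_LMset fun _ => exists_mem_span_LHset_same_leading hdeg)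

end SameLeadingTerms

lemma single_mem_of_MDvd {K : TwoSidedIdeal (FreeAlg R n)} {u v : Word n} (huv : MDvd v u)
    (hv : mono R v ∈ K) (c : R) : single u c ∈ K := by
  obtain ⟨w, s, rfl⟩ := huv
  have hfactor : single (w * v * s) c = single w c * mono R v * single s (1 : R) := by
    simp [mono, single_mul_single]
  rw [hfactor]
  exact K.mul_mem_right _ _ (K.mul_mem_left _ _ hv)

section GroebnerBasis

variable [LinearOrder (Word n)] {I : TwoSidedIdeal (FreeAlg R n)} {G : Set (FreeAlg R n)}

lemma mono_LMon_of_IsMonic {g : FreeAlg R n} (hg : IsMonic g) : mono R (LMon g) = LTerm g := by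
  rw [LTerm, hg.2, mono, of_apply]

lemma mono_LMon_mem_span {S : Set (FreeAlg R n)} {g : FreeAlg R n} (hg : g ∈ S) (hg0 : g ≠ 0) :
    mono R (LMon g) ∈ TwoSidedIdeal.span (mono R '' LMset S) :=
  TwoSidedIdeal.subset_span ⟨LMon g, ⟨g, hg, hg0, rfl⟩, rfl⟩

lemma span_LTset_eq_span_mono_LMset (hGI : ∀ g ∈ G, g ∈ I) (hGB : IsMonicGB G I) :
    TwoSidedIdeal.span (LTset (I : Set (FreeAlg R n))) =
      TwoSidedIdeal.span (mono R '' LMset G) := by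
  refine le_antisymm (TwoSidedIdeal.span_le.2 ?_) (TwoSidedIdeal.span_le.2 ?_)
  · rintro _ ⟨f, hf, hf0, rfl⟩
    obtain ⟨g, hg, hdvd⟩ := hGB.2 f hf hf0
    exact single_mem_of_MDvd hdvd (mono_LMon_mem_span hg (hGB.1 g hg).1) _
  · rintro _ ⟨_, ⟨g, hg, hg0, rfl⟩, rfl⟩
    rw [mono_LMon_of_IsMonic (hGB.1 g hg)]
    exact TwoSidedIdeal.subset_span ⟨g, hGI g hg, hg0, rfl⟩

lemma span_mono_LMset_eq (hGI : ∀ g ∈ G, g ∈ I) (hGB : IsMonicGB G I) :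
    TwoSidedIdeal.span (mono R '' LMset G) =
      TwoSidedIdeal.span (mono R '' LMset (I : Set (FreeAlg R n))) := by
  refine le_antisymm (TwoSidedIdeal.span_mono (Set.image_mono ?_)) (TwoSidedIdeal.span_le.2 ?_)
  · rintro _ ⟨g, hg, hg0, rfl⟩
    exact ⟨g, hGI g hg, hg0, rfl⟩
  · rintro _ ⟨_, ⟨f, hf, hf0, rfl⟩, rfl⟩
    obtain ⟨g, hg, hdvd⟩ := hGB.2 f hf hf0
    exact single_mem_of_MDvd hdvd (mono_LMon_mem_span hg (hGB.1 g hg).1) 1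

end GroebnerBasis

theorem five_leading_ideals_eq_general [LinearOrder (Word n)] (d : Fin n → ℕ)
    (hord : IsGradedMonomialOrder d) (I : TwoSidedIdeal (FreeAlg R n))
    (G : Set (FreeAlg R n)) (hGI : ∀ g ∈ G, g ∈ I)
    (hGB : IsMonicGB G I) :
    TwoSidedIdeal.span (LTset ((TwoSidedIdeal.span (LHset d (I : Set (FreeAlg R n))) :
        TwoSidedIdeal (FreeAlg R n)) : Set (FreeAlg R n))) =
      TwoSidedIdeal.span (LTset (I : Set (FreeAlg R n))) ∧
    TwoSidedIdeal.span (LTset (I : Set (FreeAlg R n))) =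
      TwoSidedIdeal.span (mono R '' LMset G) ∧
    TwoSidedIdeal.span (mono R '' LMset G) =
      TwoSidedIdeal.span (mono R '' LMset (I : Set (FreeAlg R n))) ∧
    TwoSidedIdeal.span (mono R '' LMset (I : Set (FreeAlg R n))) =
      TwoSidedIdeal.span (mono R ''
        LMset ((TwoSidedIdeal.span (LHset d (I : Set (FreeAlg R n))) :
          TwoSidedIdeal (FreeAlg R n)) : Set (FreeAlg R n))) := by
  refine ⟨?_, span_LTset_eq_span_mono_LMset hGI hGB, span_mono_LMset_eq hGI hGB, ?_⟩
  · rw [LTset_span_LHset hord.2]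
  · rw [LMset_span_LHset hord.2]

/-- If `I` admits a monic Gröbner basis `G` with respect to an ℕ-graded
monomial ordering and `J = ⟨LH(I)⟩`, then the ideals generated by the leading terms of
`J`, the leading terms of `I`, `LM(G)`, `LM(I)` and `LM(J)` all coincide. -/
theorem five_leading_ideals_eq [LinearOrder (Word n)] (d : Fin n → ℕ) (hd : ∀ i, 0 < d i)
    (hord : IsGradedMonomialOrder d) (I : TwoSidedIdeal (FreeAlg R n))
    (G : Set (FreeAlg R n)) (hGI : ∀ g ∈ G, g ∈ I)
    (hGB : IsMonicGB G I) :
    TwoSidedIdeal.span (LTset ((TwoSidedIdeal.span (LHset d (I : Set (FreeAlg R n))) :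
        TwoSidedIdeal (FreeAlg R n)) : Set (FreeAlg R n))) =
      TwoSidedIdeal.span (LTset (I : Set (FreeAlg R n))) ∧
    TwoSidedIdeal.span (LTset (I : Set (FreeAlg R n))) =
      TwoSidedIdeal.span (mono R '' LMset G) ∧
    TwoSidedIdeal.span (mono R '' LMset G) =
      TwoSidedIdeal.span (mono R '' LMset (I : Set (FreeAlg R n))) ∧
    TwoSidedIdeal.span (mono R '' LMset (I : Set (FreeAlg R n))) =
      TwoSidedIdeal.span (mono R ''
        LMset ((TwoSidedIdeal.span (LHset d (I : Set (FreeAlg R n))) :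
          TwoSidedIdeal (FreeAlg R n)) : Set (FreeAlg R n))) :=
  five_leading_ideals_eq_general d hord I G hGI hGB
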